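/- Let n ≥ 2, 1 < p < ∞, and let ρ, ρ⊥ ∈ ℝⁿ satisfy |ρ| = |ρ⊥| = 1 and ρ·ρ⊥ = 0. Let w : ℝ → ℝ be a C^∞ function satisfying w''(s) + V(w(s), w'(s)) w(s) = 0 and (w(s))² + (w'(s))² > 0 for all s ∈ ℝ. Then the function h : ℝⁿ → ℝ defined by h(x) = e^{−ρ·x} w(ρ⊥·x) is p-harmonic in ℝⁿ, i.e. its gradient never vanishes, the vector field F(x) = |∇h(x)|^{p−2} ∇h(x) is differentiable, and div F(x) = 0 for all x ∈ ℝⁿ. -/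

import Mathlib

open MeasureTheory Filter Set
open scoped RealInnerProductSpace Topology

noncomputable section

/-- The nonlinearity `V(a,b) = ((2p−3)b² + (p−1)a²) / ((p−1)b² + a²)` appearing in the
Wolff ODE. -/
def wolffV (p a b : ℝ) : ℝ :=
  ((2 * p - 3) * b ^ 2 + (p - 1) * a ^ 2) / ((p - 1) * b ^ 2 + a ^ 2)

/-- The (pointwise) divergence of a vector field `F : ℝⁿ → ℝⁿ`, i.e. the sum of the
diagonal entries of its derivative. -/
def vdiv {n : ℕ} (F : EuclideanSpace ℝ (Fin n) → EuclideanSpace ℝ (Fin n))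
    (x : EuclideanSpace ℝ (Fin n)) : ℝ :=
  ∑ i : Fin n, fderiv ℝ F x (EuclideanSpace.single i 1) i

/-- `A = w² + w'²`. -/
def wolffA (w : ℝ → ℝ) (s : ℝ) : ℝ := (w s) ^ 2 + (deriv w s) ^ 2

/-- `P = A^{(p-2)/2}`. -/
def wolffP (p : ℝ) (w : ℝ → ℝ) (s : ℝ) : ℝ := wolffA w s ^ ((p - 2) / 2)

/-- derivative of `A`. -/
def wolffAd (w : ℝ → ℝ) (s : ℝ) : ℝ :=
  2 * w s * deriv w s + 2 * deriv w s * deriv (deriv w) s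

/-- derivative of `P·w`. -/
def wolffGd (p : ℝ) (w : ℝ → ℝ) (s : ℝ) : ℝ :=
  ((p - 2) / 2 * wolffA w s ^ ((p - 2) / 2 - 1) * wolffAd w s) * w s +
    wolffP p w s * deriv w s

section Aux

variable {p : ℝ} {w : ℝ → ℝ}

lemma wolff_denom_pos (hp : 1 < p) {a b : ℝ} (hab : 0 < a ^ 2 + b ^ 2) :
    0 < (p - 1) * b ^ 2 + a ^ 2 := by
  rcases eq_or_ne b 0 with hb | hb
  · rw [hb] at hab ⊢; simpa using by nlinarith
  · have hb2 : 0 < b ^ 2 := by positivity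
    nlinarith [sq_nonneg a]

lemma deriv_differentiable (hw : ContDiff ℝ (⊤ : ℕ∞) w) : Differentiable ℝ (deriv w) := by
  have hw' : ContDiff ℝ (↑(⊤ : ℕ∞)) w := hw.of_le (by simp)
  exact ((contDiff_infty_iff_deriv.mp hw').2).differentiable (by simp)

lemma hasDerivAt_A (hw : ContDiff ℝ (⊤ : ℕ∞) w) (s : ℝ) :
    HasDerivAt (wolffA w) (wolffAd w s) s := by
  have hw1 : HasDerivAt w (deriv w s) s := (hw.differentiable (by simp) s).hasDerivAt
  have hw2 : HasDerivAt (deriv w) (deriv (deriv w) s) s :=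
    (deriv_differentiable hw s).hasDerivAt
  have := (hw1.pow 2).add (hw2.pow 2)
  unfold wolffA wolffAd
  refine this.congr_deriv (Eq.symm ?_)
  simp

lemma hasDerivAt_P (hw : ContDiff ℝ (⊤ : ℕ∞) w)
    (hnz : ∀ s : ℝ, 0 < (w s) ^ 2 + (deriv w s) ^ 2) (s : ℝ) :
    HasDerivAt (wolffP p w)
      ((p - 2) / 2 * wolffA w s ^ ((p - 2) / 2 - 1) * wolffAd w s) s := by
  have hne : wolffA w s ≠ 0 := (hnz s).ne'
  have := (hasDerivAt_A hw s).rpow_const (p := (p - 2) / 2) (Or.inl hne)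
  unfold wolffP
  convert this using 1
  ring

lemma hasDerivAt_g (hw : ContDiff ℝ (⊤ : ℕ∞) w)
    (hnz : ∀ s : ℝ, 0 < (w s) ^ 2 + (deriv w s) ^ 2) (s : ℝ) :
    HasDerivAt (fun s => wolffP p w s * w s) (wolffGd p w s) s := by
  have := (hasDerivAt_P (p := p) hw hnz s).mul (hw.differentiable (by simp) s).hasDerivAt
  unfold wolffGd
  exact this

/-- The key identity: `(P w')' = -(p-1) P w` along solutions of the Wolff ODE. -/
lemma key_hasDerivAt (hp : 1 < p) (hw : ContDiff ℝ (⊤ : ℕ∞) w)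
    (hode : ∀ s : ℝ, deriv (deriv w) s + wolffV p (w s) (deriv w s) * w s = 0)
    (hnz : ∀ s : ℝ, 0 < (w s) ^ 2 + (deriv w s) ^ 2) (s : ℝ) :
    HasDerivAt (fun s => wolffP p w s * deriv w s)
      (-(p - 1) * (wolffP p w s * w s)) s := by
  have hw2 : HasDerivAt (deriv w) (deriv (deriv w) s) s :=
    (deriv_differentiable hw s).hasDerivAt
  have hmul := (hasDerivAt_P (p := p) hw hnz s).mul hw2
  refine hmul.congr_deriv (Eq.symm ?_)
  have hApos : (0:ℝ) < (w s) ^ 2 + (deriv w s) ^ 2 := hnz s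
  have hDpos : 0 < (p - 1) * (deriv w s) ^ 2 + (w s) ^ 2 := wolff_denom_pos hp hApos
  have e1 : deriv (deriv w) s * ((p - 1) * (deriv w s) ^ 2 + (w s) ^ 2) =
      -(((2 * p - 3) * (deriv w s) ^ 2 + (p - 1) * (w s) ^ 2) * w s) := by
    have h0 := hode s
    unfold wolffV at h0
    have hq : ((2 * p - 3) * deriv w s ^ 2 + (p - 1) * w s ^ 2) /
        ((p - 1) * deriv w s ^ 2 + w s ^ 2) * ((p - 1) * deriv w s ^ 2 + w s ^ 2) =
        (2 * p - 3) * deriv w s ^ 2 + (p - 1) * w s ^ 2 := div_mul_cancel₀ _ hDpos.ne'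
    linear_combination ((p - 1) * deriv w s ^ 2 + w s ^ 2) * h0 - w s * hq
  unfold wolffP wolffA wolffAd
  have e2 : ((w s) ^ 2 + (deriv w s) ^ 2) ^ ((p - 2) / 2) =
      ((w s) ^ 2 + (deriv w s) ^ 2) ^ ((p - 2) / 2 - 1) * ((w s) ^ 2 + (deriv w s) ^ 2) := by
    rw [← Real.rpow_add_one hApos.ne' ((p - 2) / 2 - 1)]
    ring_nf
  rw [e2]
  linear_combination (-(((w s) ^ 2 + (deriv w s) ^ 2) ^ ((p - 2) / 2 - 1))) * e1

end Aux

/-- The Wolff function `h(x) = e^{−ρ·x} w(ρ⊥·x)` is `p`-harmonic: its gradient never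
vanishes, the vector field `F = |∇h|^{p−2}∇h` is differentiable, and `div F = 0`
everywhere. -/
theorem wolff_function_p_harmonic {n : ℕ} (hn : 2 ≤ n) (p : ℝ) (hp : 1 < p)
    (ρ ρperp : EuclideanSpace ℝ (Fin n)) (hρ : ‖ρ‖ = 1) (hρperp : ‖ρperp‖ = 1)
    (horth : ⟪ρ, ρperp⟫ = 0)
    (w : ℝ → ℝ) (hw : ContDiff ℝ (⊤ : ℕ∞) w)
    (hode : ∀ s : ℝ, deriv (deriv w) s + wolffV p (w s) (deriv w s) * w s = 0)
    (hnz : ∀ s : ℝ, 0 < (w s) ^ 2 + (deriv w s) ^ 2)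
    (h : EuclideanSpace ℝ (Fin n) → ℝ)
    (hdef : ∀ x, h x = Real.exp (-⟪ρ, x⟫) * w ⟪ρperp, x⟫)
    (F : EuclideanSpace ℝ (Fin n) → EuclideanSpace ℝ (Fin n))
    (hFdef : ∀ x, F x = ‖gradient h x‖ ^ (p - 2) • gradient h x) :
    (∀ x, gradient h x ≠ 0) ∧ (∀ x, DifferentiableAt ℝ F x) ∧ (∀ x, vdiv F x = 0) := by
  have hfun : h = fun x => Real.exp (-⟪ρ, x⟫) * w ⟪ρperp, x⟫ := funext hdef
  subst hfun
  have hw1 : Differentiable ℝ w := hw.differentiable (by simp)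
  have hrr : ⟪ρ, ρ⟫ = 1 := by rw [real_inner_self_eq_norm_sq, hρ]; norm_num
  have hpp : ⟪ρperp, ρperp⟫ = 1 := by rw [real_inner_self_eq_norm_sq, hρperp]; norm_num
  have hpr : ⟪ρperp, ρ⟫ = 0 := by rw [real_inner_comm]; exact horth
  have hti : ∀ x : EuclideanSpace ℝ (Fin n),
      HasFDerivAt (fun y : EuclideanSpace ℝ (Fin n) => ⟪ρ, y⟫) (innerSL ℝ ρ) x :=
    fun x => (innerSL ℝ ρ).hasFDerivAt
  have hsi : ∀ x : EuclideanSpace ℝ (Fin n),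
      HasFDerivAt (fun y : EuclideanSpace ℝ (Fin n) => ⟪ρperp, y⟫) (innerSL ℝ ρperp) x :=
    fun x => (innerSL ℝ ρperp).hasFDerivAt
  -- the gradient
  have hgrad : ∀ x, HasGradientAt (fun x => Real.exp (-⟪ρ, x⟫) * w ⟪ρperp, x⟫)
      (Real.exp (-⟪ρ, x⟫) • ((-(w ⟪ρperp, x⟫)) • ρ + deriv w ⟪ρperp, x⟫ • ρperp)) x := by
    intro x
    rw [hasGradientAt_iff_hasFDerivAt]
    have hE : HasFDerivAt (fun y : EuclideanSpace ℝ (Fin n) => Real.exp (-⟪ρ, y⟫))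
        (Real.exp (-⟪ρ, x⟫) • -(innerSL ℝ ρ)) x :=
      (Real.hasDerivAt_exp _).comp_hasFDerivAt x (hti x).neg
    have hW : HasFDerivAt (fun y : EuclideanSpace ℝ (Fin n) => w ⟪ρperp, y⟫)
        (deriv w ⟪ρperp, x⟫ • innerSL ℝ ρperp) x :=
      (hw1 _).hasDerivAt.comp_hasFDerivAt x (hsi x)
    refine (hE.mul hW).congr_fderiv ?_
    ext y
    simp only [ContinuousLinearMap.add_apply, ContinuousLinearMap.smul_apply,
      ContinuousLinearMap.neg_apply, innerSL_apply_apply, smul_eq_mul,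
      InnerProductSpace.toDual_apply_apply, inner_add_left, real_inner_smul_left]
    ring
  have hgradeq : ∀ x, gradient (fun x => Real.exp (-⟪ρ, x⟫) * w ⟪ρperp, x⟫) x =
      Real.exp (-⟪ρ, x⟫) • ((-(w ⟪ρperp, x⟫)) • ρ + deriv w ⟪ρperp, x⟫ • ρperp) :=
    fun x => (hgrad x).gradient
  -- norm of the gradient
  have hnorm2 : ∀ x, ‖(-(w ⟪ρperp, x⟫)) • ρ + deriv w ⟪ρperp, x⟫ • ρperp‖ ^ 2 =
      (w ⟪ρperp, x⟫) ^ 2 + (deriv w ⟪ρperp, x⟫) ^ 2 := by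
    intro x
    rw [← real_inner_self_eq_norm_sq, inner_add_add_self]
    simp only [real_inner_smul_left, real_inner_smul_right, hrr, hpp, hpr, horth]
    ring
  have hnormG : ∀ x, ‖gradient (fun x => Real.exp (-⟪ρ, x⟫) * w ⟪ρperp, x⟫) x‖ =
      Real.exp (-⟪ρ, x⟫) * Real.sqrt ((w ⟪ρperp, x⟫) ^ 2 + (deriv w ⟪ρperp, x⟫) ^ 2) := by
    intro x
    rw [hgradeq x, norm_smul, Real.norm_eq_abs, abs_of_pos (Real.exp_pos _)]
    congr 1
    rw [← hnorm2 x, Real.sqrt_sq (norm_nonneg _)]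
  have hGpos : ∀ x, 0 < ‖gradient (fun x => Real.exp (-⟪ρ, x⟫) * w ⟪ρperp, x⟫) x‖ := by
    intro x
    rw [hnormG x]
    exact mul_pos (Real.exp_pos _) (Real.sqrt_pos.mpr (hnz _))
  -- rewrite F
  have hFeq : F = fun x =>
      (-(Real.exp (-((p - 1) * ⟪ρ, x⟫)) * (wolffP p w ⟪ρperp, x⟫ * w ⟪ρperp, x⟫))) • ρ +
      (Real.exp (-((p - 1) * ⟪ρ, x⟫)) * (wolffP p w ⟪ρperp, x⟫ * deriv w ⟪ρperp, x⟫)) • ρperp := by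
    funext x
    rw [hFdef x, hnormG x, hgradeq x]
    have hsq : Real.sqrt ((w ⟪ρperp, x⟫) ^ 2 + (deriv w ⟪ρperp, x⟫) ^ 2) ^ (p - 2) =
        wolffP p w ⟪ρperp, x⟫ := by
      unfold wolffP wolffA
      rw [Real.sqrt_eq_rpow, ← Real.rpow_mul (hnz _).le]
      congr 1
      ring
    rw [Real.mul_rpow (Real.exp_pos _).le (Real.sqrt_nonneg _), hsq, ← Real.exp_mul]
    have hexp : Real.exp (-⟪ρ, x⟫ * (p - 2)) * Real.exp (-⟪ρ, x⟫) =
        Real.exp (-((p - 1) * ⟪ρ, x⟫)) := by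
      rw [← Real.exp_add]; congr 1; ring
    match_scalars
    · linear_combination (wolffP p w ⟪ρperp, x⟫ * -(w ⟪ρperp, x⟫)) * hexp
    · linear_combination (wolffP p w ⟪ρperp, x⟫ * deriv w ⟪ρperp, x⟫) * hexp
  subst hFeq
  -- coefficient functions for the derivative of F
  set c1 : EuclideanSpace ℝ (Fin n) → ℝ := fun x =>
    (p - 1) * Real.exp (-((p - 1) * ⟪ρ, x⟫)) * (wolffP p w ⟪ρperp, x⟫ * w ⟪ρperp, x⟫) with hc1
  set c2 : EuclideanSpace ℝ (Fin n) → ℝ := fun x =>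
    -(Real.exp (-((p - 1) * ⟪ρ, x⟫)) * wolffGd p w ⟪ρperp, x⟫) with hc2
  set d1 : EuclideanSpace ℝ (Fin n) → ℝ := fun x =>
    -((p - 1) * Real.exp (-((p - 1) * ⟪ρ, x⟫)) *
      (wolffP p w ⟪ρperp, x⟫ * deriv w ⟪ρperp, x⟫)) with hd1
  set d2 : EuclideanSpace ℝ (Fin n) → ℝ := fun x =>
    -((p - 1) * Real.exp (-((p - 1) * ⟪ρ, x⟫)) * (wolffP p w ⟪ρperp, x⟫ * w ⟪ρperp, x⟫)) with hd2
  -- derivative of F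
  have hEd : ∀ x : EuclideanSpace ℝ (Fin n),
      HasFDerivAt (fun y : EuclideanSpace ℝ (Fin n) => Real.exp (-((p - 1) * ⟪ρ, y⟫)))
        (Real.exp (-((p - 1) * ⟪ρ, x⟫)) • -((p - 1) • innerSL ℝ ρ)) x :=
    fun x => (Real.hasDerivAt_exp _).comp_hasFDerivAt x ((hti x).const_mul (p - 1)).neg
  have hgd : ∀ x : EuclideanSpace ℝ (Fin n),
      HasFDerivAt (fun y : EuclideanSpace ℝ (Fin n) => wolffP p w ⟪ρperp, y⟫ * w ⟪ρperp, y⟫)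
        (wolffGd p w ⟪ρperp, x⟫ • innerSL ℝ ρperp) x :=
    fun x => (hasDerivAt_g (p := p) hw hnz _).comp_hasFDerivAt x (hsi x)
  have hkd : ∀ x : EuclideanSpace ℝ (Fin n),
      HasFDerivAt (fun y : EuclideanSpace ℝ (Fin n) =>
          wolffP p w ⟪ρperp, y⟫ * deriv w ⟪ρperp, y⟫)
        ((-(p - 1) * (wolffP p w ⟪ρperp, x⟫ * w ⟪ρperp, x⟫)) • innerSL ℝ ρperp) x :=
    fun x => (key_hasDerivAt hp hw hode hnz _).comp_hasFDerivAt x (hsi x)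
  have hDF : ∀ x : EuclideanSpace ℝ (Fin n),
      HasFDerivAt (fun x : EuclideanSpace ℝ (Fin n) =>
        (-(Real.exp (-((p - 1) * ⟪ρ, x⟫)) * (wolffP p w ⟪ρperp, x⟫ * w ⟪ρperp, x⟫))) • ρ +
        (Real.exp (-((p - 1) * ⟪ρ, x⟫)) *
          (wolffP p w ⟪ρperp, x⟫ * deriv w ⟪ρperp, x⟫)) • ρperp)
        (((c1 x • innerSL ℝ ρ + c2 x • innerSL ℝ ρperp).smulRight ρ) +
          ((d1 x • innerSL ℝ ρ + d2 x • innerSL ℝ ρperp).smulRight ρperp)) x := by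
    intro x
    refine ((((hEd x).mul (hgd x)).neg.smul_const ρ).add
      (((hEd x).mul (hkd x)).smul_const ρperp)).congr_fderiv ?_
    refine ContinuousLinearMap.ext fun y => ?_
    simp only [ContinuousLinearMap.add_apply, ContinuousLinearMap.smulRight_apply,
      ContinuousLinearMap.smul_apply, ContinuousLinearMap.neg_apply, innerSL_apply_apply,
      smul_eq_mul, hc1, hc2, hd1, hd2]
    module
  -- sums of coordinate products
  have hsingle : ∀ (v : EuclideanSpace ℝ (Fin n)) (i : Fin n),
      ⟪v, EuclideanSpace.single i 1⟫ = v i := by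
    intro v i
    rw [show (1 : ℝ) = ((1 : ℝ) : ℝ) from rfl, EuclideanSpace.inner_single_right]
    simp
  have hsum_rr : ∑ i : Fin n, ρ i * ρ i = 1 := by
    have : ⟪ρ, ρ⟫ = ∑ i : Fin n, ρ i * ρ i := by
      rw [PiLp.inner_apply]; simp [RCLike.inner_apply, mul_comm, ← sq]
    rw [← this, hrr]
  have hsum_pp : ∑ i : Fin n, ρperp i * ρperp i = 1 := by
    have : ⟪ρperp, ρperp⟫ = ∑ i : Fin n, ρperp i * ρperp i := by
      rw [PiLp.inner_apply]; simp [RCLike.inner_apply, mul_comm, ← sq]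
    rw [← this, hpp]
  have hsum_rp : ∑ i : Fin n, ρ i * ρperp i = 0 := by
    have : ⟪ρ, ρperp⟫ = ∑ i : Fin n, ρ i * ρperp i := by
      rw [PiLp.inner_apply]; simp [RCLike.inner_apply, mul_comm, ← sq]
    rw [← this, horth]
  refine ⟨fun x => ?_, fun x => (hDF x).differentiableAt, fun x => ?_⟩
  · intro h0
    have := hGpos x
    rw [h0, norm_zero] at this
    exact lt_irrefl 0 this
  · unfold vdiv
    rw [(hDF x).fderiv]
    have happ : ∀ i : Fin n,
        ((((c1 x • innerSL ℝ ρ + c2 x • innerSL ℝ ρperp).smulRight ρ) +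
          ((d1 x • innerSL ℝ ρ + d2 x • innerSL ℝ ρperp).smulRight ρperp))
            (EuclideanSpace.single i 1)) i =
        c1 x * (ρ i * ρ i) + c2 x * (ρperp i * ρ i) + d1 x * (ρ i * ρperp i) +
          d2 x * (ρperp i * ρperp i) := by
      intro i
      simp only [ContinuousLinearMap.add_apply, ContinuousLinearMap.smulRight_apply,
        ContinuousLinearMap.smul_apply, innerSL_apply_apply, smul_eq_mul, hsingle,
        PiLp.add_apply, PiLp.smul_apply]
      ring
    rw [Finset.sum_congr rfl fun i _ => happ i]
    rw [Finset.sum_add_distrib, Finset.sum_add_distrib, Finset.sum_add_distrib,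
      ← Finset.mul_sum, ← Finset.mul_sum, ← Finset.mul_sum, ← Finset.mul_sum]
    rw [hsum_rr, hsum_pp, hsum_rp]
    rw [show ∑ i : Fin n, ρperp i * ρ i = 0 by
      rw [← hsum_rp]; exact Finset.sum_congr rfl fun i _ => mul_comm _ _]
    rw [hc1, hd2]
    ring
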